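/- arXiv:2506.22587 — 2 statements merged into one kernel-verified Lean document; each statement's English description precedes it below -/
import Mathlib

section
/- For every real T ≥ 1, ∫_{-T}^{T} e^{-i z²} dz = √π · e^{-iπ/4} + O(1/T), i.e. there is an absolute constant C such that |∫_{-T}^{T} e^{-i z²} dz − √π e^{-iπ/4}| ≤ C/T for all T ≥ 1. -/
/-!
For `Re b > 0` the whole-line Gaussian integral is `(π / b) ^ (1/2)`, so the error of the
truncated integral over `[-T, T]` is twice the tail `∫_T^∞ e^{-b x²}`. Integrating by parts
against `-e^{-b x²} / (2 b x)` bounds that tail by `1 / (|b| T)`, uniformly in `b`. Letting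
`b + ε → b` as `ε → 0⁺` extends the bound to `Re b = 0`, `b ≠ 0`. For `b = i` the error is
at most `2 / T`, and `(π / i) ^ (1/2) = √π e^{-iπ/4}`.
-/

open Real MeasureTheory Set Filter Topology Complex

lemma hasDerivAt_cexp_neg_mul_sq (b : ℂ) (x : ℝ) :
    HasDerivAt (fun x : ℝ => cexp (-b * x ^ 2)) (-2 * b * x * cexp (-b * x ^ 2)) x := by
  have := ((hasDerivAt_pow 2 (x : ℂ)).const_mul (-b)).cexp.comp_ofReal
  convert this using 1
  push_cast
  ring

section

variable {b : ℂ}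

lemma norm_cexp_neg_mul_sq_le_one (hb : 0 ≤ b.re) (x : ℝ) : ‖cexp (-b * x ^ 2)‖ ≤ 1 := by
  rw [norm_cexp_neg_mul_sq, Real.exp_le_one_iff, neg_mul, neg_nonpos]
  positivity

lemma norm_cexp_neg_mul_sq_div_le (hb : 0 ≤ b.re) (x : ℝ) (c : ℂ) :
    ‖cexp (-b * x ^ 2) / c‖ ≤ ‖c‖⁻¹ := by
  rw [norm_div, div_eq_mul_inv]
  exact mul_le_of_le_one_left (by positivity) (norm_cexp_neg_mul_sq_le_one hb x)

lemma norm_cexp_neg_mul_sq_div_sq_le (hb : 0 ≤ b.re) {x : ℝ} (hx : 0 < x) :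
    ‖cexp (-b * x ^ 2) / (2 * b * x ^ 2)‖ ≤ ‖2 * b‖⁻¹ * x ^ (-2 : ℝ) := by
  refine (norm_cexp_neg_mul_sq_div_le hb x _).trans_eq ?_
  rw [norm_mul, mul_inv, rpow_neg hx.le, rpow_two, ← ofReal_pow, norm_real,
    Real.norm_of_nonneg (by positivity)]

lemma integrableOn_Ioi_cexp_neg_mul_sq_div_sq (hb : 0 ≤ b.re) {T : ℝ} (hT : 0 < T) :
    IntegrableOn (fun x : ℝ => cexp (-b * x ^ 2) / (2 * b * x ^ 2)) (Ioi T) := by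
  refine ((integrableOn_Ioi_rpow_of_lt (by norm_num : (-2 : ℝ) < -1) hT).const_mul
    ‖2 * b‖⁻¹).mono' (Measurable.aestronglyMeasurable (by fun_prop)) ?_
  filter_upwards [self_mem_ae_restrict measurableSet_Ioi] with x hx
  exact norm_cexp_neg_mul_sq_div_sq_le hb (hT.trans hx)

lemma tendsto_cexp_neg_mul_sq_div_atTop (hb : 0 ≤ b.re) (c : ℂ) :
    Tendsto (fun x : ℝ => cexp (-b * x ^ 2) / (c * x)) atTop (𝓝 0) := by
  refine squeeze_zero_norm' ?_
    (tendsto_inv_atTop_zero.const_mul ‖c‖⁻¹ |>.trans_eq (by rw [mul_zero]))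
  filter_upwards [eventually_ge_atTop 0] with x hx
  refine (norm_cexp_neg_mul_sq_div_le hb x _).trans_eq ?_
  rw [norm_mul, mul_inv, norm_real, Real.norm_of_nonneg hx]

lemma integral_Ioi_cexp_neg_mul_sq (hb : 0 < b.re) {T : ℝ} (hT : 0 < T) :
    ∫ x in Ioi T, cexp (-b * x ^ 2) =
      cexp (-b * T ^ 2) / (2 * b * T) - ∫ x in Ioi T, cexp (-b * x ^ 2) / (2 * b * x ^ 2) := by
  have hb0 : b ≠ 0 := fun h => by simp [h] at hb
  have hderiv : ∀ x ∈ Ici T, HasDerivAt (fun x : ℝ => -cexp (-b * x ^ 2) / (2 * b * x))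
      (cexp (-b * x ^ 2) + cexp (-b * x ^ 2) / (2 * b * x ^ 2)) x := by
    intro x hx
    have hx0 : (x : ℂ) ≠ 0 := ofReal_ne_zero.mpr (hT.trans_le hx).ne'
    have hden : HasDerivAt (fun y : ℝ => 2 * b * y) (2 * b) x := by
      simpa using (hasDerivAt_id x).ofReal_comp.const_mul (2 * b)
    refine ((hasDerivAt_cexp_neg_mul_sq b x).fun_neg.fun_div hden
      (by simp [hb0, hx0])).congr_deriv ?_
    field_simp
    ring
  have hlim := (tendsto_cexp_neg_mul_sq_div_atTop hb.le (2 * b)).neg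
  simp only [neg_zero, ← neg_div] at hlim
  have hint := (integrable_cexp_neg_mul_sq hb).integrableOn (s := Ioi T)
  have hint' := integrableOn_Ioi_cexp_neg_mul_sq_div_sq hb.le hT
  have hFTC := integral_Ioi_of_hasDerivAt_of_tendsto' hderiv (hint.add hint') hlim
  rw [integral_add hint hint', zero_sub, neg_div, neg_neg] at hFTC
  rw [eq_sub_iff_add_eq, hFTC]

lemma norm_integral_Ioi_cexp_neg_mul_sq_le (hb : 0 < b.re) {T : ℝ} (hT : 0 < T) :
    ‖∫ x in Ioi T, cexp (-b * x ^ 2)‖ ≤ 1 / (‖b‖ * T) := by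
  have hboundary : ‖cexp (-b * T ^ 2) / (2 * b * T)‖ ≤ 1 / (2 * ‖b‖ * T) := by
    refine (norm_cexp_neg_mul_sq_div_le hb.le T _).trans_eq ?_
    rw [norm_mul, norm_mul, norm_real, Real.norm_of_nonneg hT.le, Complex.norm_ofNat, one_div]
  have hrest :
      ‖∫ x in Ioi T, cexp (-b * x ^ 2) / (2 * b * x ^ 2)‖ ≤ 1 / (2 * ‖b‖ * T) := by
    refine (norm_integral_le_of_norm_le ((integrableOn_Ioi_rpow_of_lt
      (by norm_num : (-2 : ℝ) < -1) hT).const_mul ‖2 * b‖⁻¹) ?_).trans_eq ?_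
    · filter_upwards [self_mem_ae_restrict measurableSet_Ioi] with x hx
      exact norm_cexp_neg_mul_sq_div_sq_le hb.le (hT.trans hx)
    · rw [integral_const_mul, integral_Ioi_rpow_of_lt (by norm_num) hT, norm_mul,
        Complex.norm_ofNat]
      norm_num [rpow_neg_one]
      ring
  calc ‖∫ x in Ioi T, cexp (-b * x ^ 2)‖
      ≤ 1 / (2 * ‖b‖ * T) + 1 / (2 * ‖b‖ * T) := by
        rw [integral_Ioi_cexp_neg_mul_sq hb hT]
        exact (norm_sub_le _ _).trans (add_le_add hboundary hrest)
    _ = 1 / (‖b‖ * T) := by ring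

lemma intervalIntegral_cexp_neg_mul_sq_eq_sub (hb : 0 < b.re) (T : ℝ) :
    ∫ x in -T..T, cexp (-b * x ^ 2) =
      (π / b) ^ (1 / 2 : ℂ) - 2 * ∫ x in Ioi T, cexp (-b * x ^ 2) := by
  have hcont : Continuous fun x : ℝ => cexp (-b * x ^ 2) := by fun_prop
  have hsymm : ∫ x in -T..0, cexp (-b * x ^ 2) = ∫ x in 0..T, cexp (-b * x ^ 2) := by
    have := intervalIntegral.integral_comp_neg (a := 0) (b := T) fun x : ℝ => cexp (-b * x ^ 2)
    simp only [ofReal_neg, neg_sq, neg_zero] at this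
    exact this.symm
  have hhalf : ∫ x in 0..T, cexp (-b * x ^ 2) =
      (π / b) ^ (1 / 2 : ℂ) / 2 - ∫ x in Ioi T, cexp (-b * x ^ 2) := by
    rw [← integral_gaussian_complex_Ioi hb, intervalIntegral.integral_Ioi_sub_Ioi'
      (integrable_cexp_neg_mul_sq hb).integrableOn (integrable_cexp_neg_mul_sq hb).integrableOn]
  rw [← intervalIntegral.integral_add_adjacent_intervals (b := 0) (hcont.intervalIntegrable _ _)
    (hcont.intervalIntegrable _ _), hsymm, hhalf]
  ring

lemma norm_intervalIntegral_cexp_neg_mul_sq_sub_le_of_re_pos (hb : 0 < b.re) {T : ℝ}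
    (hT : 0 < T) :
    ‖(∫ x in -T..T, cexp (-b * x ^ 2)) - (π / b) ^ (1 / 2 : ℂ)‖ ≤ 2 / (‖b‖ * T) := by
  rw [intervalIntegral_cexp_neg_mul_sq_eq_sub hb, sub_sub_cancel_left, norm_neg, norm_mul,
    Complex.norm_ofNat]
  exact (mul_le_mul_of_nonneg_left (norm_integral_Ioi_cexp_neg_mul_sq_le hb hT)
    two_pos.le).trans_eq (by ring)

lemma mem_slitPlane_of_re_nonneg {z : ℂ} (hz : 0 ≤ z.re) (hz0 : z ≠ 0) : z ∈ slitPlane := by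
  rcases hz.lt_or_eq with h | h
  · exact Or.inl h
  · exact Or.inr fun him => hz0 (Complex.ext h.symm him)

lemma norm_intervalIntegral_cexp_neg_mul_sq_sub_le (hb : 0 ≤ b.re) (hb0 : b ≠ 0)
    {T : ℝ} (hT : 0 < T) :
    ‖(∫ x in -T..T, cexp (-b * x ^ 2)) - (π / b) ^ (1 / 2 : ℂ)‖ ≤ 2 / (‖b‖ * T) := by
  have hslit : π / b ∈ slitPlane := by
    refine mem_slitPlane_of_re_nonneg ?_ (div_ne_zero (ofReal_ne_zero.mpr pi_ne_zero) hb0)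
    rw [div_re, ofReal_re, ofReal_im, zero_mul, zero_div, add_zero]
    exact div_nonneg (mul_nonneg pi_pos.le hb) (normSq_nonneg b)
  have hint : Tendsto (fun ε : ℝ => ∫ x in -T..T, cexp (-(b + ε) * x ^ 2)) (𝓝 0)
      (𝓝 (∫ x in -T..T, cexp (-b * x ^ 2))) := by
    simpa only [ofReal_zero, add_zero] using
      (intervalIntegral.continuous_parametric_intervalIntegral_of_continuous'
        (f := fun (ε x : ℝ) => cexp (-(b + ε) * x ^ 2)) (μ := volume) (by fun_prop)
        (-T) T).tendsto 0
  have hval : Tendsto (fun ε : ℝ => (π / (b + ε)) ^ (1 / 2 : ℂ)) (𝓝 0)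
      (𝓝 ((π / b) ^ (1 / 2 : ℂ))) := by
    have : ContinuousAt (fun ε : ℝ => (π / (b + ε)) ^ (1 / 2 : ℂ)) 0 :=
      ((continuousAt_cpow_const (by simpa using hslit)).comp
        (continuousAt_const.div (by fun_prop) (by simpa using hb0)))
    simpa using this.tendsto
  have hbound :
      Tendsto (fun ε : ℝ => 2 / (‖b + ε‖ * T)) (𝓝 0) (𝓝 (2 / (‖b‖ * T))) := by
    have : ContinuousAt (fun ε : ℝ => 2 / (‖b + ε‖ * T)) 0 :=
      continuousAt_const.div (by fun_prop) (by simp [hb0, hT.ne'])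
    simpa using this.tendsto
  refine le_of_tendsto_of_tendsto (b := 𝓝[>] 0)
    ((hint.sub hval).norm.mono_left nhdsWithin_le_nhds) (hbound.mono_left nhdsWithin_le_nhds) ?_
  filter_upwards [self_mem_nhdsWithin] with ε (hε : 0 < ε)
  exact norm_intervalIntegral_cexp_neg_mul_sq_sub_le_of_re_pos
    (by simpa using add_pos_of_nonneg_of_pos hb hε) hT

end

lemma cpow_one_half_pi_div_I :
    ((π : ℂ) / I) ^ (1 / 2 : ℂ) = (√π : ℂ) * cexp (-(π / 4 : ℝ) * I) := by
  rw [div_I, ← mul_neg, cpow_def_of_ne_zero (by simp [pi_ne_zero]),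
    log_ofReal_mul pi_pos (by simp), log_neg_I, add_mul, Complex.exp_add, sqrt_eq_rpow,
    rpow_def_of_pos pi_pos]
  push_cast
  ring_nf

theorem stmt6 : ∃ C : ℝ, 0 < C ∧ ∀ T : ℝ, 1 ≤ T →
    ‖(∫ z in (-T)..T, Complex.exp (-(Complex.I * (z : ℂ) ^ 2))) -
        (Real.sqrt π : ℂ) * Complex.exp (-(π / 4 : ℝ) * Complex.I)‖ ≤ C / T := by
  refine ⟨2, two_pos, fun T hT => ?_⟩
  have hbound := norm_intervalIntegral_cexp_neg_mul_sq_sub_le (b := I) (by simp) I_ne_zero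
    (one_pos.trans_le hT)
  rw [cpow_one_half_pi_div_I, norm_I, one_mul] at hbound
  simpa only [neg_mul] using hbound
end

section
/- Let α ≥ 2, m, k positive integers, and x ≥ 2 a real number. Let F : ℝ → ℝ be a locally integrable function with F(y) = O(y) for y ≥ 1 (i.e. |F(y)| ≤ C·y for all y ≥ 1). Then (α^{1/(mk)}/√π) ∫_{x}^{∞} F(x^{mk} e^{u/x}) exp(−u² α^{2/(mk)}) du = O(x^{mk−1} e^{−x²}). -/
open MeasureTheory Real

/-!
For `u ≥ x ≥ 1` and `γ ≥ 1` the exponent `u / x - γ u²` is at most `1 - (γ - 1) x² - x u`.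
Hence, when `|F y| ≤ C y`, the integrand is dominated by `C x^n e^{1 - (γ - 1) x²} e^{-x u}`,
whose integral over `(x, ∞)` is `C x^n e^{1 - (γ - 1) x²} e^{-x²} / x`. With `δ = α^{1/(mk)}`
and `γ = δ²`, the prefactor `δ` is absorbed by `e^{-(δ² - 1) x²}`.
-/

lemma div_sub_mul_sq_le {x u γ : ℝ} (hx : 1 ≤ x) (hxu : x ≤ u) (hγ : 1 ≤ γ) :
    u / x - γ * u ^ 2 ≤ 1 - (γ - 1) * x ^ 2 - x * u := by
  have hdiv : u / x ≤ 1 + (u - x) := by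
    rw [div_le_iff₀ (by linarith)]
    nlinarith
  have hsq : x ^ 2 ≤ u ^ 2 := pow_le_pow_left₀ (by linarith) hxu 2
  nlinarith [mul_le_mul_of_nonneg_left hsq (by linarith : 0 ≤ γ - 1)]

lemma exp_div_mul_exp_neg_sq_le {x u γ : ℝ} (hx : 1 ≤ x) (hxu : x ≤ u) (hγ : 1 ≤ γ) :
    exp (u / x) * exp (-u ^ 2 * γ) ≤ exp (1 - (γ - 1) * x ^ 2) * exp (-x * u) := by
  rw [← exp_add, ← exp_add, exp_le_exp]
  linarith [div_sub_mul_sq_le hx hxu hγ]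

lemma abs_integral_Ioi_comp_exp_mul_gaussian_le {F : ℝ → ℝ} {C x γ : ℝ} (n : ℕ)
    (hF : ∀ y : ℝ, 1 ≤ y → |F y| ≤ C * y) (hx : 1 ≤ x) (hγ : 1 ≤ γ) :
    |∫ u in Set.Ioi x, F (x ^ n * exp (u / x)) * exp (-u ^ 2 * γ)|
      ≤ C * x ^ n * exp (1 - (γ - 1) * x ^ 2) * (exp (-x ^ 2) / x) := by
  have hC : 0 ≤ C := by simpa using (abs_nonneg _).trans (hF 1 le_rfl)
  have hx0 : 0 < x := by linarith
  set A := C * x ^ n * exp (1 - (γ - 1) * x ^ 2)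
  have hdom : ∀ u ∈ Set.Ioi x,
      ‖F (x ^ n * exp (u / x)) * exp (-u ^ 2 * γ)‖ ≤ A * exp (-x * u) := by
    intro u hu
    have hy : 1 ≤ x ^ n * exp (u / x) :=
      one_le_mul_of_one_le_of_one_le (one_le_pow₀ hx)
        (one_le_exp (div_nonneg (hx0.trans hu).le hx0.le))
    calc ‖F (x ^ n * exp (u / x)) * exp (-u ^ 2 * γ)‖
        = |F (x ^ n * exp (u / x))| * exp (-u ^ 2 * γ) := by
          rw [norm_mul, norm_eq_abs, norm_eq_abs, abs_exp]
      _ ≤ C * (x ^ n * exp (u / x)) * exp (-u ^ 2 * γ) := by gcongr; exact hF _ hy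
      _ = C * x ^ n * (exp (u / x) * exp (-u ^ 2 * γ)) := by ring
      _ ≤ C * x ^ n * (exp (1 - (γ - 1) * x ^ 2) * exp (-x * u)) := by
          gcongr _ * ?_
          exact exp_div_mul_exp_neg_sq_le hx hu.le hγ
      _ = A * exp (-x * u) := by ring
  have hint : IntegrableOn (fun u => A * exp (-x * u)) (Set.Ioi x) :=
    (integrableOn_exp_mul_Ioi (neg_lt_zero.mpr hx0) x).const_mul A
  calc |∫ u in Set.Ioi x, F (x ^ n * exp (u / x)) * exp (-u ^ 2 * γ)|
      ≤ ∫ u in Set.Ioi x, A * exp (-x * u) :=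
        norm_integral_le_of_norm_le hint
          ((ae_restrict_iff' measurableSet_Ioi).mpr (.of_forall hdom))
    _ = A * (exp (-x ^ 2) / x) := by
        rw [integral_const_mul, integral_exp_mul_Ioi (neg_lt_zero.mpr hx0)]
        field_simp

lemma mul_exp_neg_sq_sub_one_mul_sq_le_one {δ x : ℝ} (hδ : 1 ≤ δ) (hx : 1 ≤ x) :
    δ * exp (-(δ ^ 2 - 1) * x ^ 2) ≤ 1 := by
  have hexp : δ ≤ exp ((δ ^ 2 - 1) * x ^ 2) := by
    have hx2 : 1 ≤ x ^ 2 := one_le_pow₀ hx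
    have : δ - 1 ≤ (δ ^ 2 - 1) * x ^ 2 := by
      nlinarith [mul_le_mul_of_nonneg_left hx2 (by nlinarith : 0 ≤ δ ^ 2 - 1)]
    linarith [add_one_le_exp ((δ ^ 2 - 1) * x ^ 2)]
  calc δ * exp (-(δ ^ 2 - 1) * x ^ 2)
      ≤ exp ((δ ^ 2 - 1) * x ^ 2) * exp (-(δ ^ 2 - 1) * x ^ 2) := by gcongr
    _ = 1 := by rw [← exp_add]; ring_nf; exact exp_zero

lemma pow_div_le_pow_pred {x : ℝ} (hx : 1 ≤ x) (n : ℕ) : x ^ n / x ≤ x ^ (n - 1) := by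
  cases n with
  | zero => simpa using inv_le_one_of_one_le₀ hx
  | succ n => rw [pow_succ, mul_div_cancel_right₀ _ (by linarith)]; rfl

theorem stmt7_general (m k : ℕ) (C : ℝ) :
    ∃ C' : ℝ, ∀ x α : ℝ, 2 ≤ x → 2 ≤ α → ∀ F : ℝ → ℝ,
      LocallyIntegrable F volume →
      (∀ y : ℝ, 1 ≤ y → |F y| ≤ C * y) →
      |(α ^ ((1 : ℝ) / (m * k)) / Real.sqrt π) *
          ∫ u in Set.Ioi x,
            F (x ^ (m * k) * Real.exp (u / x)) * Real.exp (-u ^ 2 * α ^ ((2 : ℝ) / (m * k)))|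
        ≤ C' * x ^ (m * k - 1) * Real.exp (-x ^ 2) := by
  refine ⟨C * exp 1 / √π, fun x α hx hα F _ hF => ?_⟩
  have hC : 0 ≤ C := by simpa using (abs_nonneg _).trans (hF 1 le_rfl)
  have hx1 : 1 ≤ x := by linarith
  set δ := α ^ ((1 : ℝ) / (m * k))
  have hδ : 1 ≤ δ := one_le_rpow (by linarith) (by positivity)
  have hδsq : α ^ ((2 : ℝ) / (m * k)) = δ ^ 2 := by
    rw [← rpow_natCast, ← rpow_mul (by linarith)]
    ring_nf
  rw [hδsq, abs_mul, abs_of_nonneg (by positivity)]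
  calc δ / √π * |∫ u in Set.Ioi x, F (x ^ (m * k) * exp (u / x)) * exp (-u ^ 2 * δ ^ 2)|
      ≤ δ / √π * (C * x ^ (m * k) * exp (1 - (δ ^ 2 - 1) * x ^ 2) * (exp (-x ^ 2) / x)) := by
        gcongr
        exact abs_integral_Ioi_comp_exp_mul_gaussian_le _ hF hx1 (one_le_pow₀ hδ)
    _ = C * exp 1 / √π * (δ * exp (-(δ ^ 2 - 1) * x ^ 2)) * (x ^ (m * k) / x)
          * exp (-x ^ 2) := by
        rw [sub_eq_add_neg, exp_add, neg_mul]
        ring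
    _ ≤ C * exp 1 / √π * 1 * x ^ (m * k - 1) * exp (-x ^ 2) := by
        gcongr
        · exact mul_exp_neg_sq_sub_one_mul_sq_le_one hδ hx1
        · exact pow_div_le_pow_pred hx1 _
    _ = C * exp 1 / √π * x ^ (m * k - 1) * exp (-x ^ 2) := by ring

theorem stmt7 (m k : ℕ) (hm : 0 < m) (hk : 0 < k) (C : ℝ) (hC : 0 ≤ C) :
    ∃ C' : ℝ, ∀ x α : ℝ, 2 ≤ x → 2 ≤ α → ∀ F : ℝ → ℝ,
      LocallyIntegrable F volume →
      (∀ y : ℝ, 1 ≤ y → |F y| ≤ C * y) →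
      |(α ^ ((1 : ℝ) / (m * k)) / Real.sqrt π) *
          ∫ u in Set.Ioi x,
            F (x ^ (m * k) * Real.exp (u / x)) * Real.exp (-u ^ 2 * α ^ ((2 : ℝ) / (m * k)))|
        ≤ C' * x ^ (m * k - 1) * Real.exp (-x ^ 2) :=
  stmt7_general m k C
end
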